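/- On the phase space ℝ² × ℝ² with coordinates (x⁰, x¹, k₀, k₁), fix a real number α ≠ 0 and define E := k₀ − α k₁ x¹, P := k₁, and N := x¹ k₀ − k₁ ( α (x¹)²/2 + (e^{−2αx⁰} − 1)/(2α) ). Then the Poisson brackets satisfy the 1+1 dimensional de Sitter algebra: {E, P} = α P, {P, N} = E, and {E, N} = P − α N. -/

import Mathlib

open scoped BigOperators

/-- Phase space: `ℝⁿ × ℝⁿ` with coordinates `(x, k)`. -/
abbrev Phase (n : ℕ) := (Fin n → ℝ) × (Fin n → ℝ)

/-- Spacetime partial derivative `∂_μ f`. -/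
noncomputable def pdx {n : ℕ} (μ : Fin n) (f : Phase n → ℝ) (p : Phase n) : ℝ :=
  fderiv ℝ f p (Pi.single μ 1, 0)

/-- Momentum partial derivative `∂̄^μ f`. -/
noncomputable def pdk {n : ℕ} (μ : Fin n) (f : Phase n → ℝ) (p : Phase n) : ℝ :=
  fderiv ℝ f p (0, Pi.single μ 1)

/-- Horizontal derivative `δ_μ f = ∂_μ f + N_{νμ} ∂̄^ν f` associated to a
nonlinear connection `N`. -/
noncomputable def hderiv {n : ℕ} (N : Fin n → Fin n → Phase n → ℝ) (μ : Fin n)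
    (f : Phase n → ℝ) (p : Phase n) : ℝ :=
  pdx μ f p + ∑ ν, N ν μ p * pdk ν f p

/-- Poisson bracket `{F,G} = Σ_μ (∂̄^μ F ∂_μ G − ∂_μ F ∂̄^μ G)`, so `{k_ν, x^μ} = δ^μ_ν`. -/
noncomputable def poisson {n : ℕ} (F G : Phase n → ℝ) (p : Phase n) : ℝ :=
  ∑ μ, (pdk μ F p * pdx μ G p - pdx μ F p * pdk μ G p)

/-- Generator of time translations on 1+1 de Sitter space. -/
noncomputable def Egen (α : ℝ) (p : Phase 2) : ℝ := p.2 0 - α * p.2 1 * p.1 1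

/-- Generator of space translations on 1+1 de Sitter space. -/
noncomputable def Pgen (p : Phase 2) : ℝ := p.2 1

/-- Boost generator on 1+1 de Sitter space. -/
noncomputable def Ngen (α : ℝ) (p : Phase 2) : ℝ :=
  p.1 1 * p.2 0 - p.2 1 * (α * (p.1 1) ^ 2 / 2 + (Real.exp (-2 * α * p.1 0) - 1) / (2 * α))


noncomputable def Lx (i : Fin 2) : Phase 2 →L[ℝ] ℝ :=
  (ContinuousLinearMap.proj i).comp (ContinuousLinearMap.fst ℝ (Fin 2 → ℝ) (Fin 2 → ℝ))

noncomputable def Lk (i : Fin 2) : Phase 2 →L[ℝ] ℝ :=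
  (ContinuousLinearMap.proj i).comp (ContinuousLinearMap.snd ℝ (Fin 2 → ℝ) (Fin 2 → ℝ))

lemma hx (i : Fin 2) (p : Phase 2) : HasFDerivAt (fun p : Phase 2 => p.1 i) (Lx i) p :=
  (Lx i).hasFDerivAt

lemma hdivc {f : Phase 2 → ℝ} {f' : Phase 2 →L[ℝ] ℝ} {p : Phase 2}
    (h : HasFDerivAt f f' p) (c : ℝ) : HasFDerivAt (fun y => f y / c) (c⁻¹ • f') p := by
  simpa [div_eq_mul_inv] using h.mul_const c⁻¹

lemma hk (i : Fin 2) (p : Phase 2) : HasFDerivAt (fun p : Phase 2 => p.2 i) (Lk i) p :=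
  (Lk i).hasFDerivAt

/-- The generators `E`, `P`, `N` close the 1+1 dimensional de Sitter algebra
under the Poisson bracket. -/
theorem deSitter_algebra (α : ℝ) (hα : α ≠ 0) :
    (∀ p : Phase 2, poisson (Egen α) Pgen p = α * Pgen p) ∧
    (∀ p : Phase 2, poisson Pgen (Ngen α) p = Egen α p) ∧
    (∀ p : Phase 2, poisson (Egen α) (Ngen α) p = Pgen p - α * Ngen α p) := by
  refine ⟨fun p => ?_, fun p => ?_, fun p => ?_⟩ <;>
  · have hsq : HasFDerivAt (fun q : Phase 2 => q.1 1 ^ 2) ((2 * p.1 1) • Lx 1) p := by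
      have h2 := (hx 1 p).mul (hx 1 p)
      simp only [← pow_two] at h2
      have e : (2 * p.1 1) • Lx 1 = p.1 1 • Lx 1 + p.1 1 • Lx 1 := by rw [two_mul, add_smul]
      rw [e]
      exact h2.congr_of_eventuallyEq (Filter.Eventually.of_forall fun q => (Pi.pow_apply _ _ _).symm)
    have hE : fderiv ℝ (Egen α) p = _ :=
      ((hk 0 p).sub (((hk 1 p).const_mul α).mul (hx 1 p))).fderiv
    have hP : fderiv ℝ Pgen p = _ := (hk 1 p).fderiv
    have hN : fderiv ℝ (Ngen α) p = _ :=
      (((hx 1 p).mul (hk 0 p)).sub ((hk 1 p).mul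
        (((hdivc (hsq.const_mul α) 2)).add
          (hdivc (((hx 0 p).const_mul (-2 * α)).exp.sub_const 1) (2 * α))))).fderiv
    simp only [poisson, pdx, pdk, Fin.sum_univ_two, hE, hP, hN, Egen, Pgen, Ngen]
    simp [Lx, Lk, Pi.single_apply]
    try field_simp
    try ring
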